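/- Let n ≥ 2, c > 0, and let L_u be the n×n Laplacian of the uniformly weighted line graph. For every integer k with 1 ≤ k ≤ n, the vector v_k ∈ ℝⁿ with entries v_k(j) = sin((2j−1)kπ/(2n+1)) for j = 1, …, n satisfies (L_u + 2c·e₁e₁ᵀ + c·e_ne_nᵀ) v_k = 2c(1 − cos(2kπ/(2n+1))) v_k. Hence the DST-6 basis vectors are eigenvectors of the generalized graph Laplacian of the line graph with a self-loop of weight 2c at the first vertex and a self-loop of weight c at the last vertex. -/

import Mathlib

open Matrix Real

/-!
Put `θ = kπ/(2n+1)` and `y t = sin ((2t+1)θ)`. By `sin (x - 2θ) + sin (x + 2θ) = 2 sin x cos 2θ`,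
`y` solves the second-difference equation `2 y t - y (t-1) - y (t+1) = 2 (1 - cos 2θ) y t` at
every `t`. At an end vertex of the path a self-loop stands in for the edge to the missing ghost
neighbour: the loop of weight `2c` at the first vertex does so because `y (-1) = -y 0`, and the
loop of weight `c` at the last vertex because `y n = sin kπ = 0`.
-/

def lineLaplacian (n : ℕ) (c : ℝ) : Matrix (Fin n) (Fin n) ℝ :=
  Matrix.of fun i j =>
    if i = j then (if i.val = 0 ∨ i.val = n - 1 then c else 2 * c)
    else if i.val + 1 = j.val ∨ j.val + 1 = i.val then -c else 0

theorem Fin.sum_univ_ite_val_eq {M : Type*} [AddCommMonoid M] {n : ℕ} (m : ℕ) (f : Fin n → M) :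
    ∑ j : Fin n, (if (j : ℕ) = m then f j else 0) = if h : m < n then f ⟨m, h⟩ else 0 := by
  split_ifs with h
  · simp [← Fin.ext_iff (b := ⟨m, h⟩)]
  · exact Finset.sum_eq_zero fun j _ => if_neg (by omega)

-- The factor `if i = 0 then 0 else c` is needed because `i - 1` truncates to `0` at `i = 0`.
theorem lineLaplacian_apply_mul (n : ℕ) (c : ℝ) (i j : Fin n) (x : ℝ) :
    lineLaplacian n c i j * x =
      (if (i : ℕ) = 0 ∨ (i : ℕ) = n - 1 then c else 2 * c) * (if (j : ℕ) = i then x else 0)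
        - c * (if (j : ℕ) = i + 1 then x else 0)
        - (if (i : ℕ) = 0 then 0 else c) * (if (j : ℕ) = i - 1 then x else 0) := by
  simp only [lineLaplacian, of_apply, Fin.ext_iff]
  split_ifs <;> first | omega | ring

theorem lineLaplacian_mulVec_apply {n : ℕ} (hn : 2 ≤ n) (c : ℝ) (y : ℝ → ℝ) (i : Fin n) :
    (lineLaplacian n c *ᵥ fun j => y j) i =
      c * (2 * y i - y (i - 1) - y (i + 1))
        + (if (i : ℕ) = 0 then c * (y (-1) - y 0) else 0)
        + (if (i : ℕ) = n - 1 then c * (y n - y (n - 1)) else 0) := by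
  simp only [mulVec, dotProduct, lineLaplacian_apply_mul, Finset.sum_sub_distrib,
    ← Finset.mul_sum, Fin.sum_univ_ite_val_eq]
  obtain ⟨i, hi⟩ := i
  rcases Nat.eq_zero_or_pos i with rfl | hpos
  · suffices c * y 0 - c * y 1 = c * (2 * y 0 - y (-1) - y 1) + c * (y (-1) - y 0) by
      simpa [hi, show 1 < n by omega, show 0 ≠ n - 1 by omega]
    ring
  rcases eq_or_ne i (n - 1) with rfl | hlast
  · suffices c * y (n - 1) - c * y (n - 2) =
        c * (2 * y (n - 1) - y (n - 2) - y n) + c * (y n - y (n - 1)) by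
      simpa [hpos.ne', Nat.sub_add_cancel (show 1 ≤ n by omega), show 0 < n by omega, Nat.sub_sub,
        Nat.cast_sub (show 1 ≤ n by omega), Nat.cast_sub hn, sub_sub, one_add_one_eq_two]
    ring
  · suffices 2 * c * y i - c * y (i + 1) - c * y (i - 1) =
        c * (2 * y i - y (i - 1) - y (i + 1)) by
      simpa [hi, hpos.ne', hlast, show i + 1 < n by omega, show i - 1 < n by omega,
        Nat.cast_sub (show 1 ≤ i by omega)]
    ring

theorem lineLaplacian_add_selfLoops_mulVec_eq_smul {n : ℕ} (hn : 2 ≤ n) (c a b μ : ℝ)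
    (y : ℝ → ℝ) (hinterior : ∀ i : Fin n, c * (2 * y i - y (i - 1) - y (i + 1)) = μ * y i)
    (hfirst : a * y 0 = c * (y 0 - y (-1))) (hlast : b * y (n - 1) = c * (y (n - 1) - y n)) :
    (lineLaplacian n c
        + single (⟨0, Nat.zero_lt_of_lt hn⟩ : Fin n) ⟨0, Nat.zero_lt_of_lt hn⟩ a
        + single (⟨n - 1, Nat.sub_one_lt_of_lt hn⟩ : Fin n) ⟨n - 1, Nat.sub_one_lt_of_lt hn⟩ b) *ᵥ
      (fun j : Fin n => y j) = μ • fun j : Fin n => y j := by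
  ext i
  rw [add_mulVec, add_mulVec, Pi.add_apply, Pi.add_apply, lineLaplacian_mulVec_apply hn,
    single_mulVec, single_mulVec, Pi.smul_apply, smul_eq_mul, ← hinterior]
  obtain ⟨i, hi⟩ := i
  simp only [Function.update_apply, Fin.ext_iff, Pi.zero_apply]
  rcases Nat.eq_zero_or_pos i with rfl | hpos
  · simp only [CharP.cast_eq_zero, zero_sub, zero_add, ↓reduceIte, show 0 ≠ n - 1 by omega,
      add_zero]
    linarith
  rcases eq_or_ne i (n - 1) with rfl | hne
  · simp only [Nat.cast_sub (show 1 ≤ n by omega), Nat.cast_one, sub_add_cancel, hpos.ne',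
      ↓reduceIte, add_zero]
    linarith
  · simp [hpos.ne', hne]

/-- DST-6 basis vectors are eigenvectors of the line graph Laplacian with a self-loop of weight `2c` at the first vertex and `c` at the last vertex. For `1 ≤ k ≤ n` the given vector is an eigenvector
with the stated eigenvalue. -/
theorem dst6_eigenvectors (n : ℕ) (hn : 2 ≤ n) (c : ℝ)
    (k : ℕ) :
    (lineLaplacian n c + Matrix.single (⟨0, by omega⟩ : Fin n) ⟨0, by omega⟩ (2 * c) + Matrix.single (⟨n - 1, by omega⟩ : Fin n) ⟨n - 1, by omega⟩ c) *ᵥ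
        (fun j : Fin n => Real.sin ((2 * (j : ℝ) + 1) * (k : ℝ) * Real.pi / (2 * n + 1))) =
      (2 * c * (1 - Real.cos (2 * (k : ℝ) * Real.pi / (2 * n + 1)))) •
        (fun j : Fin n => Real.sin ((2 * (j : ℝ) + 1) * (k : ℝ) * Real.pi / (2 * n + 1))) := by
  set θ := (k : ℝ) * π / (2 * n + 1) with hθ
  have hvec : (fun j : Fin n => sin ((2 * (j : ℝ) + 1) * k * π / (2 * n + 1))) =
      fun j : Fin n => sin ((2 * (j : ℝ) + 1) * θ) := by
    funext j
    rw [hθ, mul_assoc, mul_div_assoc]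
  rw [show 2 * (k : ℝ) * π / (2 * n + 1) = 2 * θ by rw [hθ]; ring, hvec]
  apply lineLaplacian_add_selfLoops_mulVec_eq_smul hn (y := fun t => sin ((2 * t + 1) * θ))
  · intro i
    have h := two_mul_sin_mul_cos ((2 * i + 1) * θ) (2 * θ)
    rw [show (2 * i + 1) * θ - 2 * θ = (2 * (i - 1) + 1) * θ by ring,
      show (2 * i + 1) * θ + 2 * θ = (2 * (i + 1) + 1) * θ by ring] at h
    linear_combination c * h
  · rw [show (2 * (-1) + 1) * θ = -((2 * 0 + 1) * θ) by ring, Real.sin_neg]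
    ring
  · have hkπ : (2 * n + 1) * θ = k * π := by
      rw [hθ]
      field_simp
    simp [hkπ, sin_nat_mul_pi]
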